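/- arXiv:2106.06898 — 4 statements merged into one kernel-verified Lean document; each statement's English description precedes it below -/
import Mathlib

section
/- Let U be a real Banach space, let S : U → U be locally Lipschitz (every point of U has a neighborhood on which S is Lipschitz), let K ⊆ U be compact, let n ≥ 1 be a natural number, and let ε > 0. Then there exists a continuous map Ŝ : U → U whose range is contained in a finite-dimensional linear subspace of U, such that sup over u₀ ∈ K of max over 1 ≤ k ≤ n of ‖S^k(u₀) − Ŝ^k(u₀)‖ < ε. -/
open Metric Set

section Aux

variable {U : Type*} [NormedAddCommGroup U] [NormedSpace ℝ U]

/-- A locally Lipschitz map is Lipschitz near a compact set, uniformly. -/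
lemma lipschitz_near_compact {S : U → U} (hS : LocallyLipschitz S)
    {A : Set U} (hA : IsCompact A) :
    ∃ L r : ℝ, 1 ≤ L ∧ 0 < r ∧
      ∀ a ∈ A, ∀ u : U, dist u a ≤ r → dist (S u) (S a) ≤ L * dist u a := by
  classical
  choose Kc t ht hlip using hS
  have hball : ∀ x : U, ∃ ρ > 0, ball x ρ ⊆ t x := fun x => Metric.mem_nhds_iff.mp (ht x)
  choose ρ hρ hsub using hball
  rcases A.eq_empty_or_nonempty with hAe | hAne
  · exact ⟨1, 1, le_refl 1, one_pos, by simp [hAe]⟩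
  have hcover : A ⊆ ⋃ x ∈ A, ball x (ρ x / 2) := fun a ha =>
    mem_biUnion ha (mem_ball_self (by have := hρ a; positivity))
  obtain ⟨s, hsA, hsfin, hscover⟩ :=
    hA.elim_finite_subcover_image (fun x _ => isOpen_ball) hcover
  have hFne : hsfin.toFinset.Nonempty := by
    obtain ⟨a, ha⟩ := hAne
    obtain ⟨i, hi, _⟩ := mem_iUnion₂.mp (hscover ha)
    exact ⟨i, hsfin.mem_toFinset.mpr hi⟩
  set F := hsfin.toFinset
  refine ⟨max 1 (F.sup' hFne fun x => (Kc x : ℝ)), F.inf' hFne (fun x => ρ x / 2),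
    le_max_left _ _, ?_, ?_⟩
  · rw [Finset.lt_inf'_iff]
    intro b _
    have := hρ b; positivity
  · intro a ha u hu
    obtain ⟨i, hi, hai⟩ := mem_iUnion₂.mp (hscover ha)
    have hiF : i ∈ F := hsfin.mem_toFinset.mpr hi
    have hrle : F.inf' hFne (fun x => ρ x / 2) ≤ ρ i / 2 := Finset.inf'_le _ hiF
    have hai' : dist a i < ρ i / 2 := mem_ball.mp hai
    have hui : dist u i < ρ i := by
      calc dist u i ≤ dist u a + dist a i := dist_triangle _ _ _
        _ < ρ i / 2 + ρ i / 2 := by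
            have := hu.trans hrle; linarith
        _ = ρ i := by ring
    have hut : u ∈ t i := hsub i (mem_ball.mpr hui)
    have hat : a ∈ t i := hsub i (mem_ball.mpr (by linarith [hρ i] : dist a i < ρ i))
    have := (hlip i).dist_le_mul u hut a hat
    refine this.trans (mul_le_mul_of_nonneg_right ?_ dist_nonneg)
    exact le_trans (Finset.le_sup' (fun x => (Kc x : ℝ)) hiF) (le_max_right _ _)

/-- A Schauder-type partition-of-unity approximation of the identity with values in
the convex hull of the finite set `F`. -/
noncomputable def partApprox (F : Finset U) (θ : ℝ) (u : U) : U :=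
  (∑ x ∈ F, max 0 (infDist u (F : Set U) + θ - ‖u - x‖))⁻¹ •
    ∑ x ∈ F, max 0 (infDist u (F : Set U) + θ - ‖u - x‖) • x

lemma partApprox_denom_pos {F : Finset U} (hF : F.Nonempty) {θ : ℝ} (hθ : 0 < θ) (u : U) :
    0 < ∑ x ∈ F, max 0 (infDist u (F : Set U) + θ - ‖u - x‖) := by
  have hne : (F : Set U).Nonempty := Finset.coe_nonempty.mpr hF
  obtain ⟨y, hyF, hy⟩ := (Metric.infDist_lt_iff hne).mp
    (by linarith : infDist u (F : Set U) < infDist u (F : Set U) + θ)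
  refine Finset.sum_pos' (fun x _ => le_max_left _ _) ⟨y, Finset.mem_coe.mp hyF, ?_⟩
  have : ‖u - y‖ < infDist u (F : Set U) + θ := by rwa [← dist_eq_norm]
  exact lt_max_iff.mpr (Or.inr (by linarith))

lemma partApprox_continuous {F : Finset U} (hF : F.Nonempty) {θ : ℝ} (hθ : 0 < θ) :
    Continuous (partApprox F θ) := by
  have hd : Continuous fun u : U => infDist u (F : Set U) := continuous_infDist_pt _
  have hφ : ∀ x : U, Continuous fun u => max 0 (infDist u (F : Set U) + θ - ‖u - x‖) := fun x =>
    continuous_const.max (((hd.add continuous_const).sub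
      ((continuous_id.sub continuous_const).norm)))
  have hD : Continuous fun u => ∑ x ∈ F, max 0 (infDist u (F : Set U) + θ - ‖u - x‖) :=
    continuous_finset_sum _ fun x _ => hφ x
  have hN : Continuous fun u => ∑ x ∈ F, max 0 (infDist u (F : Set U) + θ - ‖u - x‖) • x :=
    continuous_finset_sum _ fun x _ => (hφ x).smul continuous_const
  exact (hD.inv₀ fun u => (partApprox_denom_pos hF hθ u).ne').smul hN

lemma partApprox_mem_span (F : Finset U) (θ : ℝ) (u : U) :
    partApprox F θ u ∈ Submodule.span ℝ (F : Set U) := by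
  refine Submodule.smul_mem _ _ (Submodule.sum_mem _ fun x hx => ?_)
  exact Submodule.smul_mem _ _ (Submodule.subset_span (Finset.mem_coe.mpr hx))

lemma partApprox_dist {F : Finset U} (hF : F.Nonempty) {θ : ℝ} (hθ : 0 < θ) (u : U) :
    ‖partApprox F θ u - u‖ ≤ infDist u (F : Set U) + θ := by
  set d := infDist u (F : Set U) with hd
  set φ : U → ℝ := fun x => max 0 (d + θ - ‖u - x‖) with hφ
  set D := ∑ x ∈ F, φ x with hD
  have hDpos : 0 < D := partApprox_denom_pos hF hθ u
  have key : partApprox F θ u - u = D⁻¹ • ∑ x ∈ F, φ x • (x - u) := by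
    have h1 : (∑ x ∈ F, φ x • (x - u)) = (∑ x ∈ F, φ x • x) - D • u := by
      simp [smul_sub, Finset.sum_sub_distrib, hD, Finset.sum_smul]
    rw [h1, smul_sub, smul_smul, inv_mul_cancel₀ hDpos.ne', one_smul]
    rfl
  have hdθ : 0 ≤ d + θ := by
    have : 0 ≤ d := Metric.infDist_nonneg
    linarith
  have h1 : ‖∑ x ∈ F, φ x • (x - u)‖ ≤ ∑ x ∈ F, φ x * (d + θ) := by
    refine (norm_sum_le _ _).trans (Finset.sum_le_sum fun x _ => ?_)
    rw [norm_smul, Real.norm_eq_abs, abs_of_nonneg (le_max_left _ _)]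
    rcases le_or_gt (d + θ) ‖u - x‖ with hge | hlt
    · have hzero : φ x = 0 := max_eq_left (by linarith)
      rw [hzero]; simp
    · have hxu : ‖x - u‖ ≤ d + θ := by rw [norm_sub_rev]; linarith
      exact mul_le_mul_of_nonneg_left hxu (le_max_left _ _)
  rw [key, norm_smul, Real.norm_eq_abs, abs_of_nonneg (inv_nonneg.mpr hDpos.le)]
  have h2 : ∑ x ∈ F, φ x * (d + θ) = D * (d + θ) := by rw [hD, Finset.sum_mul]
  calc D⁻¹ * ‖∑ x ∈ F, φ x • (x - u)‖ ≤ D⁻¹ * (D * (d + θ)) := by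
        apply mul_le_mul_of_nonneg_left _ (inv_nonneg.mpr hDpos.le)
        rw [← h2]; exact h1
    _ = d + θ := by field_simp

lemma exists_net {A : Set U} (hA : IsCompact A) (hAne : A.Nonempty) {τ : ℝ} (hτ : 0 < τ) :
    ∃ F : Finset U, F.Nonempty ∧ ∀ a ∈ A, infDist a (F : Set U) ≤ τ := by
  classical
  have hcover : A ⊆ ⋃ x ∈ A, ball x τ := fun a ha => mem_biUnion ha (mem_ball_self hτ)
  obtain ⟨s, hsA, hsfin, hscover⟩ :=
    hA.elim_finite_subcover_image (fun x _ => isOpen_ball) hcover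
  refine ⟨hsfin.toFinset, ?_, ?_⟩
  · obtain ⟨a, ha⟩ := hAne
    obtain ⟨i, hi, _⟩ := mem_iUnion₂.mp (hscover ha)
    exact ⟨i, hsfin.mem_toFinset.mpr hi⟩
  · intro a ha
    obtain ⟨i, hi, hai⟩ := mem_iUnion₂.mp (hscover ha)
    have hmem : i ∈ (hsfin.toFinset : Set U) := by
      rw [Set.Finite.coe_toFinset]; exact hi
    exact (Metric.infDist_le_dist_of_mem hmem).trans (le_of_lt (mem_ball.mp hai))

end Aux

set_option maxHeartbeats 1000000 in
/-- Theorem 1 of the paper: for a locally Lipschitz solution operator `S` on a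
Banach space `U`, a compact set `K`, a horizon `n ≥ 1` and `ε > 0`, there is a
continuous map `Shat` with range in a finite-dimensional subspace of `U` such that
`sup_{u₀ ∈ K} max_{1 ≤ k ≤ n} ‖S^[k] u₀ - Shat^[k] u₀‖ < ε`. -/
theorem stmt_1
    {U : Type*} [NormedAddCommGroup U] [NormedSpace ℝ U] [CompleteSpace U]
    (S : U → U) (hS : LocallyLipschitz S)
    (K : Set U) (hK : IsCompact K)
    (n : ℕ) (hn : 1 ≤ n) (ε : ℝ) (hε : 0 < ε) :
    ∃ Shat : U → U, Continuous Shat ∧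
      (∃ V : Submodule ℝ U, FiniteDimensional ℝ V ∧ Set.range Shat ⊆ (V : Set U)) ∧
      (⨆ u₀ ∈ K, ⨆ k ∈ Set.Icc 1 n, ‖S^[k] u₀ - Shat^[k] u₀‖) < ε := by
  classical
  rcases K.eq_empty_or_nonempty with hKe | hKne
  · refine ⟨fun _ => 0, continuous_const, ⟨⊥, inferInstance, ?_⟩, ?_⟩
    · rintro x ⟨u, rfl⟩; simp
    · have h0 : (⨆ u₀ ∈ K, ⨆ k ∈ Set.Icc 1 n,
          ‖S^[k] u₀ - (fun _ => (0 : U))^[k] u₀‖) ≤ 0 := by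
        refine Real.iSup_le (fun u₀ => ?_) le_rfl
        haveI : IsEmpty (u₀ ∈ K) := by rw [hKe]; exact ⟨fun h => h⟩
        exact le_of_eq (Real.iSup_of_isEmpty _)
      linarith
  have hScont : Continuous S := hS.continuous
  set A : Set U := ⋃ j ∈ Finset.range (n+1), S^[j] '' K with hAdef
  have hAcomp : IsCompact A :=
    (Finset.range (n+1)).isCompact_biUnion fun j _ => hK.image (hScont.iterate j)
  obtain ⟨u₁, hu₁⟩ := hKne
  have hmemA : ∀ k ≤ n, ∀ u₀ ∈ K, S^[k] u₀ ∈ A := fun k hk u₀ hu₀ =>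
    mem_biUnion (Finset.mem_range.mpr (Nat.lt_succ_of_le hk)) ⟨u₀, hu₀, rfl⟩
  have hAne : A.Nonempty := ⟨u₁, by simpa using hmemA 0 (Nat.zero_le n) u₁ hu₁⟩
  obtain ⟨L, r, hL, hr, hLip⟩ := lipschitz_near_compact hS hAcomp
  set P : ℝ := (2*L)^n with hPdef
  have h2L : (2:ℝ) ≤ 2*L := by linarith
  have hP1 : 1 ≤ P := one_le_pow₀ (by linarith)
  have hPpos : 0 < P := lt_of_lt_of_le one_pos hP1
  have hminpos : 0 < min ε r := lt_min hε hr
  set δ : ℝ := min ε r / (2 * P) with hδdef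
  have hδ : 0 < δ := div_pos hminpos (by positivity)
  have h2δP : 2 * δ * P = min ε r := by
    rw [hδdef]; field_simp
  obtain ⟨F, hFne, hFnet⟩ := exists_net hAcomp hAne hδ
  set Shat : U → U := fun u => partApprox F δ (S u) with hShatdef
  have hcont : Continuous Shat := (partApprox_continuous hFne hδ).comp hScont
  refine ⟨Shat, hcont,
    ⟨Submodule.span ℝ (F : Set U), FiniteDimensional.span_of_finite ℝ F.finite_toSet, ?_⟩, ?_⟩
  · rintro x ⟨u, rfl⟩; exact partApprox_mem_span F δ (S u)
  have hpow_le : ∀ k ≤ n, (2*L)^k ≤ P := fun k hk =>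
    pow_le_pow_right₀ (by linarith) hk
  have key : ∀ k, k ≤ n → ∀ u₀ ∈ K, ‖S^[k] u₀ - Shat^[k] u₀‖ ≤ 2*δ*((2*L)^k - 1) := by
    intro k
    induction k with
    | zero => intro _ u₀ _; simp
    | succ k ih =>
      intro hk1 u₀ hu₀
      have hk : k ≤ n := Nat.le_of_succ_le hk1
      have IH := ih hk u₀ hu₀
      set a := S^[k] u₀ with ha
      set w := Shat^[k] u₀ with hw
      have haA : a ∈ A := hmemA k hk u₀ hu₀
      have hbound : 2*δ*((2*L)^k - 1) ≤ r := by
        have h1 : 2*δ*((2*L)^k - 1) ≤ 2*δ*(P - 1) := by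
          have := hpow_le k hk
          nlinarith
        have h2 : min ε r ≤ r := min_le_right _ _
        nlinarith
      have hdw : dist w a ≤ r := by
        rw [dist_eq_norm, norm_sub_rev]
        exact IH.trans hbound
      have hlip1 : dist (S w) (S a) ≤ L * dist w a := hLip a haA w hdw
      have hstep : Shat^[k+1] u₀ = partApprox F δ (S w) := by
        rw [Function.iterate_succ_apply']
      have hstepS : S^[k+1] u₀ = S a := Function.iterate_succ_apply' S k u₀
      have hSaA : S a ∈ A := by
        rw [← hstepS]; exact hmemA (k+1) hk1 u₀ hu₀
      have hnet : infDist (S a) (F : Set U) ≤ δ := hFnet _ hSaA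
      have hinf : infDist (S w) (F : Set U) ≤ L * dist w a + δ := by
        calc infDist (S w) (F : Set U) ≤ infDist (S a) (F : Set U) + dist (S w) (S a) :=
              Metric.infDist_le_infDist_add_dist
          _ ≤ δ + L * dist w a := add_le_add hnet hlip1
          _ = L * dist w a + δ := by ring
      have hPi : ‖partApprox F δ (S w) - S w‖ ≤ L * dist w a + 2*δ :=
        (partApprox_dist hFne hδ (S w)).trans (by linarith)
      have htri : ‖S^[k+1] u₀ - Shat^[k+1] u₀‖ ≤
          dist (S a) (S w) + ‖partApprox F δ (S w) - S w‖ := by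
        rw [hstepS, hstep]
        calc ‖S a - partApprox F δ (S w)‖ = dist (S a) (partApprox F δ (S w)) :=
              (dist_eq_norm _ _).symm
          _ ≤ dist (S a) (S w) + dist (S w) (partApprox F δ (S w)) := dist_triangle _ _ _
          _ = dist (S a) (S w) + ‖partApprox F δ (S w) - S w‖ := by
              rw [dist_eq_norm' (S w) (partApprox F δ (S w))]
      have hdwa : dist w a ≤ 2*δ*((2*L)^k - 1) := by
        rw [dist_eq_norm, norm_sub_rev]; exact IH
      have hdist_wa : (0:ℝ) ≤ dist w a := dist_nonneg
      have hcomb : ‖S^[k+1] u₀ - Shat^[k+1] u₀‖ ≤ 2*L*dist w a + 2*δ := by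
        calc ‖S^[k+1] u₀ - Shat^[k+1] u₀‖ ≤
            dist (S a) (S w) + ‖partApprox F δ (S w) - S w‖ := htri
          _ ≤ L * dist w a + (L * dist w a + 2*δ) := by
              refine add_le_add ?_ hPi
              rw [dist_comm]; exact hlip1
          _ = 2*L*dist w a + 2*δ := by ring
      have hpowk : 1 ≤ (2*L)^k := one_le_pow₀ (by linarith)
      calc ‖S^[k+1] u₀ - Shat^[k+1] u₀‖ ≤ 2*L*dist w a + 2*δ := hcomb
        _ ≤ 2*L*(2*δ*((2*L)^k - 1)) + 2*δ := by nlinarith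
        _ ≤ 2*δ*((2*L)^(k+1) - 1) := by
            rw [pow_succ]
            nlinarith
  -- final bound on the supremum
  have hB0 : (0:ℝ) ≤ 2*δ*(P - 1) := by nlinarith
  have hBlt : 2*δ*(P - 1) < ε := by
    have : min ε r ≤ ε := min_le_left _ _
    nlinarith
  refine lt_of_le_of_lt ?_ hBlt
  refine Real.iSup_le (fun u₀ => ?_) hB0
  refine Real.iSup_le (fun hu₀ => ?_) hB0
  refine Real.iSup_le (fun k => ?_) hB0
  refine Real.iSup_le (fun hk => ?_) hB0
  have := key k hk.2 u₀ hu₀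
  have hpk : (2*L)^k ≤ P := hpow_le k hk.2
  nlinarith
end

section
/- Let H be a real inner product space, let α ≥ 0 and β > 0 be reals, and let F : H → H satisfy ⟪v, F(v)⟫ ≤ α − β‖v‖² for all v ∈ H. Then for every ρ > 0 and every ε > 0 there exists a time t* ≥ 0 (depending only on ρ, ε, α, β) such that every differentiable solution u : [0,∞) → H of u'(t) = F(u(t)) with ‖u(0)‖ ≤ ρ satisfies ‖u(t)‖² ≤ α/β + ε for all t ≥ t*. -/
open RealInnerProductSpace

/-- Dissipativity of systems satisfying `⟪u, F u⟫ ≤ α - β ‖u‖²`: for every bounded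
ball of initial conditions (radius `ρ`) and every `ε > 0`, there is a time `t*`
(depending only on `ρ, ε, α, β`) after which every solution starting in the ball
satisfies `‖u(t)‖² ≤ α/β + ε`. -/
theorem stmt_3
    {H : Type*} [NormedAddCommGroup H] [InnerProductSpace ℝ H]
    (α β : ℝ) (hα : 0 ≤ α) (hβ : 0 < β)
    (F : H → H)
    (hF : ∀ v : H, ⟪v, F v⟫ ≤ α - β * ‖v‖ ^ 2) :
    ∀ ρ : ℝ, 0 < ρ → ∀ ε : ℝ, 0 < ε →
      ∃ tstar : ℝ, 0 ≤ tstar ∧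
        ∀ u : ℝ → H,
          (∀ t : ℝ, 0 ≤ t → HasDerivWithinAt u (F (u t)) (Set.Ici 0) t) →
          ‖u 0‖ ≤ ρ →
          ∀ t : ℝ, tstar ≤ t → ‖u t‖ ^ 2 ≤ α / β + ε := by
  intro ρ hρ ε hε
  refine ⟨max 0 (Real.log (ρ ^ 2 / ε) / (2 * β)), le_max_left _ _, ?_⟩
  intro u hu hu0 t ht
  have ht0 : (0 : ℝ) ≤ t := le_trans (le_max_left _ _) ht
  set g : ℝ → ℝ := fun s => (⟪u s, u s⟫ - α / β) * Real.exp (2 * β * s) with hgdef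
  have hcontu : ContinuousOn u (Set.Ici (0 : ℝ)) :=
    fun s hs => (hu s hs).continuousWithinAt
  have hcontg : ContinuousOn g (Set.Ici (0 : ℝ)) := by
    apply ContinuousOn.mul
    · exact (hcontu.inner hcontu).sub continuousOn_const
    · exact (Real.continuous_exp.comp (continuous_const.mul continuous_id)).continuousOn
  have hderiv : ∀ s ∈ interior (Set.Ici (0 : ℝ)),
      HasDerivAt g ((⟪u s, F (u s)⟫ + ⟪F (u s), u s⟫) * Real.exp (2 * β * s)
        + (⟪u s, u s⟫ - α / β) * (Real.exp (2 * β * s) * (2 * β))) s := by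
    intro s hs
    rw [interior_Ici] at hs
    have hs0 : (0 : ℝ) < s := hs
    have hU : HasDerivAt u (F (u s)) s :=
      (hu s hs0.le).hasDerivAt (Ici_mem_nhds hs0)
    have h1 : HasDerivAt (fun r => ⟪u r, u r⟫)
        (⟪u s, F (u s)⟫ + ⟪F (u s), u s⟫) s := hU.inner ℝ hU
    have h2 : HasDerivAt (fun r : ℝ => Real.exp (2 * β * r))
        (Real.exp (2 * β * s) * (2 * β)) s := by
      have := ((hasDerivAt_id s).const_mul (2 * β)).exp
      simpa [mul_comm] using this
    exact (h1.sub_const (α / β)).mul h2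
  have hanti : AntitoneOn g (Set.Ici (0 : ℝ)) := by
    apply antitoneOn_of_deriv_nonpos (convex_Ici 0) hcontg
    · intro s hs
      exact (hderiv s hs).differentiableAt.differentiableWithinAt
    · intro s hs
      rw [(hderiv s hs).deriv]
      have h3 : ⟪u s, F (u s)⟫ ≤ α - β * ‖u s‖ ^ 2 := hF (u s)
      have h4 : ⟪F (u s), u s⟫ = ⟪u s, F (u s)⟫ := real_inner_comm _ _
      have h5 : ⟪u s, u s⟫ = ‖u s‖ ^ 2 := real_inner_self_eq_norm_sq (u s)
      have h6 : (0 : ℝ) < Real.exp (2 * β * s) := Real.exp_pos _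
      rw [h4, h5]
      have : (⟪u s, F (u s)⟫ + ⟪u s, F (u s)⟫) + (‖u s‖ ^ 2 - α / β) * (2 * β)
          ≤ 0 := by
        have hαβ : (α / β) * β = α := div_mul_cancel₀ α hβ.ne'
        nlinarith
      nlinarith
  have hgt : g t ≤ g 0 := hanti (Set.self_mem_Ici) ht0 ht0
  have hg0 : g 0 ≤ ρ ^ 2 := by
    have h5 : ⟪u 0, u 0⟫ = ‖u 0‖ ^ 2 := real_inner_self_eq_norm_sq (u 0)
    have : ‖u 0‖ ^ 2 ≤ ρ ^ 2 := by
      have := norm_nonneg (u 0)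
      nlinarith
    have hαβ : 0 ≤ α / β := div_nonneg hα hβ.le
    simp only [hgdef, mul_zero, Real.exp_zero, mul_one, h5]
    linarith
  -- exp (2βt) ≥ ρ²/ε
  have hexp : ρ ^ 2 / ε ≤ Real.exp (2 * β * t) := by
    have hlog : Real.log (ρ ^ 2 / ε) / (2 * β) ≤ t := le_trans (le_max_right _ _) ht
    have h2β : (0 : ℝ) < 2 * β := by linarith
    have : Real.log (ρ ^ 2 / ε) ≤ 2 * β * t := by
      rw [div_le_iff₀ h2β] at hlog
      linarith [hlog]
    calc ρ ^ 2 / ε = Real.exp (Real.log (ρ ^ 2 / ε)) := by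
          rw [Real.exp_log (by positivity)]
      _ ≤ Real.exp (2 * β * t) := Real.exp_le_exp.mpr this
  have h5 : ⟪u t, u t⟫ = ‖u t‖ ^ 2 := real_inner_self_eq_norm_sq (u t)
  have hE : (0 : ℝ) < Real.exp (2 * β * t) := Real.exp_pos _
  have key : (‖u t‖ ^ 2 - α / β) * Real.exp (2 * β * t) ≤ ρ ^ 2 := by
    have := hgt.trans hg0
    simpa only [hgdef, h5] using this
  have hfin : ‖u t‖ ^ 2 - α / β ≤ ρ ^ 2 / Real.exp (2 * β * t) :=
    (le_div_iff₀ hE).mpr key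
  have : ρ ^ 2 / Real.exp (2 * β * t) ≤ ε := by
    rw [div_le_iff₀ hE]
    have := mul_le_mul_of_nonneg_left hexp hε.le
    calc ρ ^ 2 = ε * (ρ ^ 2 / ε) := by field_simp
      _ ≤ ε * Real.exp (2 * β * t) := this
  linarith
end

section
/- Let H be a real inner product space, let α ≥ 0, β > 0, and ε > 0 be reals, let F : H → H satisfy ⟪v, F(v)⟫ ≤ α − β‖v‖² for all v ∈ H, and let u : [0,∞) → H be differentiable with u'(t) = F(u(t)) for all t ≥ 0. If ‖u(0)‖² ≤ α/β + ε, then ‖u(t)‖² ≤ α/β + ε for all t ≥ 0. -/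
/-!
On the sphere `‖v‖² = α/β + ε` the dissipativity inequality gives `⟪v, F v⟫ ≤ -βε < 0`, so the
right derivative `2⟪u, F u⟫` of `t ↦ ‖u t‖²` is negative whenever the trajectory touches that
sphere; the fencing form of the mean value inequality then keeps `‖u t‖²` below `α/β + ε`.
-/

open RealInnerProductSpace Set

theorem norm_sq_le_of_inner_neg_of_norm_sq_eq {H : Type*} [NormedAddCommGroup H]
    [InnerProductSpace ℝ H] {F : H → H} {R a : ℝ} (hF : ∀ v, ‖v‖ ^ 2 = R → ⟪v, F v⟫ < 0)
    {u : ℝ → H} (hu : ∀ t, a ≤ t → HasDerivWithinAt u (F (u t)) (Ici a) t)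
    (ha : ‖u a‖ ^ 2 ≤ R) : ∀ t, a ≤ t → ‖u t‖ ^ 2 ≤ R := by
  intro T hT
  refine image_le_of_deriv_right_lt_deriv_boundary (f := fun t => ‖u t‖ ^ 2)
    (f' := fun t => 2 * ⟪u t, F (u t)⟫) (B := fun _ => R) (B' := fun _ => 0) (b := T)
    ?_ ?_ ha (fun _ => hasDerivAt_const _ _) ?_ ⟨hT, le_rfl⟩
  · exact fun t ht => ((hu t ht.1).continuousWithinAt.mono Icc_subset_Ici_self).norm.pow 2
  · exact fun t ht => ((hu t ht.1).mono (Ici_subset_Ici.2 ht.1)).norm_sq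
  · intro t _ hR
    linarith [hF (u t) hR]

theorem stmt_4_general
    {H : Type*} [NormedAddCommGroup H] [InnerProductSpace ℝ H]
    (α β ε : ℝ) (hβ : 0 < β) (hε : 0 < ε)
    (F : H → H)
    (hF : ∀ v : H, ⟪v, F v⟫ ≤ α - β * ‖v‖ ^ 2)
    (u : ℝ → H)
    (hu : ∀ t : ℝ, 0 ≤ t → HasDerivWithinAt u (F (u t)) (Set.Ici 0) t)
    (h0 : ‖u 0‖ ^ 2 ≤ α / β + ε) :
    ∀ t : ℝ, 0 ≤ t → ‖u t‖ ^ 2 ≤ α / β + ε := by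
  refine norm_sq_le_of_inner_neg_of_norm_sq_eq (fun v hv => ?_) hu h0
  calc ⟪v, F v⟫ ≤ α - β * ‖v‖ ^ 2 := hF v
    _ = -(β * ε) := by rw [hv]; field_simp; ring
    _ < 0 := neg_neg_of_pos (mul_pos hβ hε)

/-- Positive invariance of the absorbing ball `{v : ‖v‖² ≤ α/β + ε}` for systems
satisfying the paper's dissipativity inequality `⟪u, F u⟫ ≤ α - β ‖u‖²`. -/
theorem stmt_4
    {H : Type*} [NormedAddCommGroup H] [InnerProductSpace ℝ H]
    (α β ε : ℝ) (hα : 0 ≤ α) (hβ : 0 < β) (hε : 0 < ε)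
    (F : H → H)
    (hF : ∀ v : H, ⟪v, F v⟫ ≤ α - β * ‖v‖ ^ 2)
    (u : ℝ → H)
    (hu : ∀ t : ℝ, 0 ≤ t → HasDerivWithinAt u (F (u t)) (Set.Ici 0) t)
    (h0 : ‖u 0‖ ^ 2 ≤ α / β + ε) :
    ∀ t : ℝ, 0 ≤ t → ‖u t‖ ^ 2 ≤ α / β + ε :=
  stmt_4_general α β ε hβ hε F hF u hu h0
end

section
/- Let U be a real normed vector space, let Ŝ : U → U be a map satisfying the linear growth bound ‖Ŝ(u)‖ ≤ a + c‖u‖ for all u ∈ U, where a ≥ 0 and c ≥ 0, let λ ∈ (0,1), and fix reals α and β > 0. Define ρ : ℝ → ℝ by ρ(s) = 1/(1 + exp(β(s − α))) and define the post-processed map Ŝ' : U → U by Ŝ'(u) = ρ(‖u‖)·Ŝ(u) + (1 − ρ(‖u‖))·λu. Then there exists R > 0 such that for every u ∈ U with ‖u‖ ≥ R one has ‖Ŝ'(u)‖ ≤ ((1 + λ)/2)·‖u‖. -/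
open Filter Topology Real

/-! Outside a large ball the sigmoid weight `ρ(‖u‖)` is at most `exp (-β (‖u‖ - α))`, which
beats the linear growth `a + c ‖u‖` of `Shat`; so the `Shat`-part of the blend is eventually
below `(1 - λ)/2 ≤ (1 - λ)/2 · ‖u‖`, while the safety part contributes at most `λ ‖u‖`. -/

lemma one_div_one_add_exp_le_one (t : ℝ) : 1 / (1 + exp t) ≤ 1 := by
  rw [div_le_one (by positivity)]
  linarith [exp_pos t]

lemma one_div_one_add_exp_le_exp_neg (t : ℝ) : 1 / (1 + exp t) ≤ exp (-t) := by
  rw [exp_neg, one_div]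
  exact inv_anti₀ (exp_pos t) (by linarith)

lemma tendsto_affine_mul_exp_neg_atTop (A B : ℝ) :
    Tendsto (fun t => (A + B * t) * exp (-t)) atTop (𝓝 0) := by
  have h := (tendsto_exp_neg_atTop_nhds_zero.const_mul A).add
    ((tendsto_pow_mul_exp_neg_atTop_nhds_zero 1).const_mul B)
  simp only [mul_zero, add_zero, pow_one] at h
  exact h.congr fun t => by ring

lemma tendsto_affine_mul_exp_neg_shift_atTop (a c α : ℝ) {β : ℝ} (hβ : 0 < β) :
    Tendsto (fun s => (a + c * s) * exp (-(β * (s - α)))) atTop (𝓝 0) := by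
  have hshift : Tendsto (fun s : ℝ => β * (s - α)) atTop atTop :=
    (tendsto_atTop_add_const_right _ (-α) tendsto_id).const_mul_atTop hβ
  refine ((tendsto_affine_mul_exp_neg_atTop (a + c * α) (c / β)).comp hshift).congr fun s => ?_
  simp only [Function.comp]
  field_simp
  ring

lemma norm_smul_add_one_sub_smul_smul_le {U : Type*} [NormedAddCommGroup U] [NormedSpace ℝ U]
    {r lam : ℝ} (hr₀ : 0 ≤ r) (hr₁ : r ≤ 1) (hlam : 0 ≤ lam) (x u : U) :
    ‖r • x + (1 - r) • (lam • u)‖ ≤ r * ‖x‖ + lam * ‖u‖ := by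
  calc ‖r • x + (1 - r) • (lam • u)‖ ≤ ‖r • x‖ + ‖(1 - r) • (lam • u)‖ := norm_add_le _ _
    _ = r * ‖x‖ + (1 - r) * (lam * ‖u‖) := by
        rw [norm_smul, norm_smul, norm_smul, Real.norm_of_nonneg hr₀,
          Real.norm_of_nonneg (sub_nonneg.mpr hr₁), Real.norm_of_nonneg hlam]
    _ ≤ r * ‖x‖ + lam * ‖u‖ := by nlinarith [mul_nonneg hlam (norm_nonneg u)]

theorem stmt_6_general
    {U : Type*} [NormedAddCommGroup U] [NormedSpace ℝ U]
    (Shat : U → U) (a c : ℝ)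
    (hgrowth : ∀ u : U, ‖Shat u‖ ≤ a + c * ‖u‖)
    (lam : ℝ) (hlam : lam ∈ Set.Ioo (0 : ℝ) 1)
    (α β : ℝ) (hβ : 0 < β)
    (ρ : ℝ → ℝ) (hρ : ∀ s : ℝ, ρ s = 1 / (1 + Real.exp (β * (s - α))))
    (Shat' : U → U)
    (hS' : ∀ u : U, Shat' u = ρ ‖u‖ • Shat u + (1 - ρ ‖u‖) • (lam • u)) :
    ∃ R : ℝ, 0 < R ∧
      ∀ u : U, R ≤ ‖u‖ → ‖Shat' u‖ ≤ ((1 + lam) / 2) * ‖u‖ := by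
  obtain ⟨hlam₀, hlam₁⟩ := hlam
  have hdecay : ∀ᶠ s in atTop, (a + c * s) * exp (-(β * (s - α))) ≤ (1 - lam) / 2 :=
    (tendsto_affine_mul_exp_neg_shift_atTop a c α hβ).eventually
      (eventually_le_nhds (by linarith))
  obtain ⟨R₀, hR₀⟩ := eventually_atTop.mp hdecay
  refine ⟨max R₀ 1, lt_max_of_lt_right one_pos, fun u hu => ?_⟩
  have hu₁ : 1 ≤ ‖u‖ := (le_max_right _ _).trans hu
  have hρu : ρ ‖u‖ * ‖Shat u‖ ≤ (a + c * ‖u‖) * exp (-(β * (‖u‖ - α))) := by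
    rw [hρ, mul_comm]
    exact mul_le_mul (hgrowth u) (one_div_one_add_exp_le_exp_neg _)
      (by positivity) ((norm_nonneg _).trans (hgrowth u))
  calc ‖Shat' u‖ ≤ ρ ‖u‖ * ‖Shat u‖ + lam * ‖u‖ := by
        rw [hS', hρ]
        exact norm_smul_add_one_sub_smul_smul_le (by positivity)
          (one_div_one_add_exp_le_one _) hlam₀.le _ _
    _ ≤ (1 - lam) / 2 + lam * ‖u‖ := by linarith [hR₀ ‖u‖ ((le_max_left _ _).trans hu)]
    _ ≤ ((1 + lam) / 2) * ‖u‖ := by nlinarith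

/-- The post-processed model `Shat' u = ρ(‖u‖) Shat u + (1 - ρ(‖u‖)) λ u`,
combining a learned map `Shat` of at most linear growth with the dissipative safety
map `u ↦ λ u` via the sigmoid `ρ(s) = 1/(1 + exp(β (s - α)))`, contracts norms by a
factor `(1 + λ)/2 < 1` outside a sufficiently large ball. -/
theorem stmt_6
    {U : Type*} [NormedAddCommGroup U] [NormedSpace ℝ U]
    (Shat : U → U) (a c : ℝ) (ha : 0 ≤ a) (hc : 0 ≤ c)
    (hgrowth : ∀ u : U, ‖Shat u‖ ≤ a + c * ‖u‖)
    (lam : ℝ) (hlam : lam ∈ Set.Ioo (0 : ℝ) 1)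
    (α β : ℝ) (hβ : 0 < β)
    (ρ : ℝ → ℝ) (hρ : ∀ s : ℝ, ρ s = 1 / (1 + Real.exp (β * (s - α))))
    (Shat' : U → U)
    (hS' : ∀ u : U, Shat' u = ρ ‖u‖ • Shat u + (1 - ρ ‖u‖) • (lam • u)) :
    ∃ R : ℝ, 0 < R ∧
      ∀ u : U, R ≤ ‖u‖ → ‖Shat' u‖ ≤ ((1 + lam) / 2) * ‖u‖ :=
  stmt_6_general Shat a c hgrowth lam hlam α β hβ ρ hρ Shat' hS'
end
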